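/- arXiv:1409.7944 — 2 statements merged into one kernel-verified Lean document; each statement's English description precedes it below -/
import Mathlib

section
/- Let W be a subspace of V and let ū, û ∈ W, u ∈ V and real numbers λ̄, λ with λ ≥ 0. Suppose: (i) a(ū, v) = λ̄ b(ū, v) for all v ∈ W and b(ū, ū) = 1 (ū is a b-normalized discrete eigenfunction); (ii) a(û, v) = λ b(u, v) for all v ∈ W (û is the Galerkin solution of the auxiliary source problem with data λu); (iii) |λ̄ − λ| ≤ C ‖ū − u‖_a² and ‖ū − u‖_b ≤ C η ‖ū − u‖_a for constants C ≥ 0, η ≥ 0. Then ‖ū − û‖_a ≤ C_b · C · (‖ū − u‖_a + λ η) · ‖ū − u‖_a. (This is estimate (3.11), the bound ‖ū_{h_k} − û_{ℓ+1,h_k}‖_a ≲ η_a(H)‖ū_{h_k} − u_{ℓ,h_k}‖_a, with all constants made explicit.) -/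
/-!
Write `e = ū - û`. Testing both Galerkin equations with `e ∈ W` gives
`‖e‖² = (λ̄ - λ) b(ū, e) + λ b(ū - u, e)`. By Cauchy–Schwarz for `b`, the normalization
`b(ū, ū) = 1` and `‖·‖_b ≤ C_b ‖·‖_a`, the right-hand side is at most
`C_b C (‖ū - u‖ + λ η) ‖ū - u‖ · ‖e‖`; dividing by `‖e‖` gives the estimate.
-/

open scoped RealInnerProductSpace

lemma le_of_sq_le_mul {α : Type*} [CommRing α] [LinearOrder α] [IsStrictOrderedRing α]
    {a K : α} (hK : 0 ≤ K) (h : a ^ 2 ≤ K * a) : a ≤ K := by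
  by_contra! hlt
  nlinarith

lemma abs_apply_le_sqrt_mul_sqrt {V : Type*} [AddCommGroup V] [Module ℝ V]
    (b : V →ₗ[ℝ] V →ₗ[ℝ] ℝ) (hb_symm : ∀ x y : V, b x y = b y x) (hb_psd : ∀ v : V, 0 ≤ b v v)
    (x y : V) : |b x y| ≤ √(b x x) * √(b y y) := by
  have hsq : b x y ^ 2 ≤ b x x * b y y := by
    simpa only [sq, ← hb_symm x y] using
      LinearMap.BilinForm.apply_mul_apply_le_of_forall_zero_le b hb_psd x y
  rw [← Real.sqrt_mul (hb_psd x), ← Real.sqrt_sq_eq_abs]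
  exact Real.sqrt_le_sqrt hsq

lemma norm_sq_sub_eq_of_galerkin {V : Type*} [NormedAddCommGroup V] [InnerProductSpace ℝ V]
    (b : V →ₗ[ℝ] V →ₗ[ℝ] ℝ) (W : Submodule ℝ V) {ubar uhat u : V} {lbar lam : ℝ}
    (hubar : ubar ∈ W) (huhat : uhat ∈ W)
    (heig : ∀ v ∈ W, ⟪ubar, v⟫ = lbar * b ubar v) (hgal : ∀ v ∈ W, ⟪uhat, v⟫ = lam * b u v) :
    ‖ubar - uhat‖ ^ 2 =
      (lbar - lam) * b ubar (ubar - uhat) + lam * b (ubar - u) (ubar - uhat) := by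
  have he : ubar - uhat ∈ W := W.sub_mem hubar huhat
  rw [← real_inner_self_eq_norm_sq, inner_sub_left, heig _ he, hgal _ he]
  simp only [map_sub, LinearMap.sub_apply]
  ring

/-- estimate (3.11): the auxiliary Galerkin solution `û` of the source
problem with data `λ u` satisfies `‖ū − û‖_a ≤ C_b C (‖ū − u‖_a + λ η) ‖ū − u‖_a`. -/
theorem stmt_1 {V : Type*} [NormedAddCommGroup V] [InnerProductSpace ℝ V]
    (b : V →ₗ[ℝ] V →ₗ[ℝ] ℝ)
    (hb_symm : ∀ x y : V, b x y = b y x)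
    (hb_psd : ∀ v : V, 0 ≤ b v v)
    (Cb : ℝ) (hCb : 0 < Cb)
    (hb_bound : ∀ v : V, Real.sqrt (b v v) ≤ Cb * ‖v‖)
    (W : Submodule ℝ V) (ubar uhat u : V) (lbar lam : ℝ)
    (hubar : ubar ∈ W) (huhat : uhat ∈ W) (hlam : 0 ≤ lam)
    (heig : ∀ v ∈ W, ⟪ubar, v⟫ = lbar * b ubar v)
    (hnormal : b ubar ubar = 1)
    (hgal : ∀ v ∈ W, ⟪uhat, v⟫ = lam * b u v)
    (C η : ℝ) (hC : 0 ≤ C) (hη : 0 ≤ η)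
    (hlam_err : |lbar - lam| ≤ C * ‖ubar - u‖ ^ 2)
    (hb_err : Real.sqrt (b (ubar - u) (ubar - u)) ≤ C * η * ‖ubar - u‖) :
    ‖ubar - uhat‖ ≤ Cb * C * (‖ubar - u‖ + lam * η) * ‖ubar - u‖ := by
  set e := ubar - uhat
  have hCS := abs_apply_le_sqrt_mul_sqrt b hb_symm hb_psd
  have h_ubar : |b ubar e| ≤ Cb * ‖e‖ :=
    (hCS ubar e).trans (by rw [hnormal, Real.sqrt_one, one_mul]; exact hb_bound e)
  have h_err : |b (ubar - u) e| ≤ C * η * ‖ubar - u‖ * (Cb * ‖e‖) :=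
    (hCS _ e).trans (mul_le_mul hb_err (hb_bound e) (Real.sqrt_nonneg _) (by positivity))
  refine le_of_sq_le_mul (by positivity) ?_
  calc ‖e‖ ^ 2 = (lbar - lam) * b ubar e + lam * b (ubar - u) e :=
        norm_sq_sub_eq_of_galerkin b W hubar huhat heig hgal
    _ ≤ |lbar - lam| * |b ubar e| + lam * |b (ubar - u) e| :=
        add_le_add ((le_abs_self _).trans (abs_mul _ _).le)
          (mul_le_mul_of_nonneg_left (le_abs_self _) hlam)
    _ ≤ C * ‖ubar - u‖ ^ 2 * (Cb * ‖e‖) + lam * (C * η * ‖ubar - u‖ * (Cb * ‖e‖)) := by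
        gcongr
    _ = Cb * C * (‖ubar - u‖ + lam * η) * ‖ubar - u‖ * ‖e‖ := by ring
end

section
/- Let n ≥ 1 and let ū_1,…,ū_n and u_1,…,u_n be elements of V. Let β > 1, γ ≥ 0, p ∈ ℕ, C ≥ 0 and δ ≥ 0 be real parameters, and set δ_k := β^{n−k} δ for 1 ≤ k ≤ n. Assume: (i) u_1 = ū_1; (ii) for every k with 2 ≤ k ≤ n, ‖ū_k − u_k‖ ≤ γ^p ‖ū_k − u_{k−1}‖; (iii) for every k with 2 ≤ k ≤ n, ‖ū_k − ū_{k−1}‖ ≤ C δ_k; (iv) β γ^p < 1. Then ‖ū_n − u_n‖ ≤ C γ^p / (1 − β γ^p) · δ. (This is Theorem 3.2, the a-norm error estimate (3.18) for the eigenfunction approximation produced by the Full Multigrid Scheme, in abstract form: ū_k is the exact finite element eigenfunction on level k, u_k the computed approximation, and δ_k = δ_{h_k}(λ) the best-approximation errors, which satisfy δ_{h_k} = δ_{h_{k−1}}/β.) -/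
/-!
Write `e_k = ‖ū_k − u_k‖` and `q = γ^p`. The triangle inequality through `ū_{k−1}` turns the
error reduction into the recursion `e_k ≤ q (C β^{n−k} δ + e_{k−1})`, starting from `e_1 = 0`.
The constant `K = C q / (1 − β q)` is the fixed point of `K ↦ q (C + β K)`, so the bound
`e_k ≤ K β^{n−k} δ` propagates from level `k − 1` to level `k`, using `β^{n−(k−1)} = β β^{n−k}`.
-/

theorem le_mul_of_le_mul_add {e b : ℕ → ℝ} {q C β K : ℝ} {m n : ℕ} (hq : 0 ≤ q)
    (hK : q * (C + β * K) = K) (hb : ∀ k, m < k → k ≤ n → b (k - 1) = β * b k)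
    (hbase : e m ≤ K * b m) (hstep : ∀ k, m < k → k ≤ n → e k ≤ q * (C * b k + e (k - 1))) :
    ∀ k, m ≤ k → k ≤ n → e k ≤ K * b k := by
  intro k hmk
  induction k, hmk using Nat.le_induction with
  | base => exact fun _ => hbase
  | succ k hmk ih =>
    intro hkn
    have hlt : m < k + 1 := Nat.lt_succ_of_le hmk
    have hprev : e k ≤ K * (β * b (k + 1)) := by
      simpa only [← hb (k + 1) hlt hkn, Nat.add_sub_cancel] using ih (by omega)
    calc e (k + 1) ≤ q * (C * b (k + 1) + e k) := by
          simpa only [Nat.add_sub_cancel] using hstep (k + 1) hlt hkn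
      _ ≤ q * (C * b (k + 1) + K * (β * b (k + 1))) := by gcongr
      _ = q * (C + β * K) * b (k + 1) := by ring
      _ = K * b (k + 1) := by rw [hK]

theorem mul_add_mul_div_one_sub_mul {q C β : ℝ} (h : β * q ≠ 1) :
    q * (C + β * (C * q / (1 - β * q))) = C * q / (1 - β * q) := by
  have hden : 1 - β * q ≠ 0 := sub_ne_zero.mpr (Ne.symm h)
  linear_combination -div_mul_cancel₀ (C * q) hden

theorem norm_sub_le_mul_add_norm_sub {V : Type*} [SeminormedAddCommGroup V] {x y z w : V}
    {q a : ℝ} (hq : 0 ≤ q) (hred : ‖x - y‖ ≤ q * ‖x - z‖) (hw : ‖x - w‖ ≤ a) :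
    ‖x - y‖ ≤ q * (a + ‖w - z‖) :=
  hred.trans <| mul_le_mul_of_nonneg_left ((norm_sub_le_norm_sub_add_norm_sub x w z).trans
    (add_le_add_left hw _)) hq

/-- Theorem 3.2 in abstract form: the full multigrid iterates satisfy
`‖ū_n − u_n‖ ≤ C γ^p / (1 − β γ^p) · δ` under the condition `β γ^p < 1`. -/
theorem stmt_9 {V : Type*} [NormedAddCommGroup V] [NormedSpace ℝ V]
    (n : ℕ) (hn : 1 ≤ n) (ubar u : ℕ → V)
    (β γ : ℝ) (p : ℕ) (C δ : ℝ)
    (hβ : 1 < β) (hγ : 0 ≤ γ) (hC : 0 ≤ C) (hδ : 0 ≤ δ)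
    (hinit : u 1 = ubar 1)
    (hreduce : ∀ k : ℕ, 2 ≤ k → k ≤ n →
      ‖ubar k - u k‖ ≤ γ ^ p * ‖ubar k - u (k - 1)‖)
    (happrox : ∀ k : ℕ, 2 ≤ k → k ≤ n →
      ‖ubar k - ubar (k - 1)‖ ≤ C * (β ^ (n - k) * δ))
    (hcond : β * γ ^ p < 1) :
    ‖ubar n - u n‖ ≤ C * γ ^ p / (1 - β * γ ^ p) * δ := by
  have hq : 0 ≤ γ ^ p := pow_nonneg hγ p
  have hden : 0 < 1 - β * γ ^ p := sub_pos.mpr hcond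
  have hpow : ∀ k, 1 < k → k ≤ n → β ^ (n - (k - 1)) * δ = β * (β ^ (n - k) * δ) := by
    intro k h1 hkn
    rw [← mul_assoc, ← pow_succ']
    congr 2
    omega
  have hbase : ‖ubar 1 - u 1‖ ≤ C * γ ^ p / (1 - β * γ ^ p) * (β ^ (n - 1) * δ) := by
    rw [hinit, sub_self, norm_zero]
    have : 0 ≤ β := by linarith
    positivity
  have hstep : ∀ k, 1 < k → k ≤ n → ‖ubar k - u k‖ ≤
      γ ^ p * (C * (β ^ (n - k) * δ) + ‖ubar (k - 1) - u (k - 1)‖) := fun k h1 hkn =>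
    norm_sub_le_mul_add_norm_sub hq (hreduce k h1 hkn) (happrox k h1 hkn)
  simpa using le_mul_of_le_mul_add hq (mul_add_mul_div_one_sub_mul hcond.ne) hpow hbase hstep
    n hn le_rfl
end
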